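/- Let A and B be real matrices with the same column index set n. Then the trace norm of the vertical concatenation [A; B] is at least the trace norm of A: ‖[A; B]‖_* ≥ ‖A‖_*. -/

import Mathlib

open Matrix

section OldSqrt
open scoped ComplexOrder
noncomputable def Matrix.PosSemidef.sqrt {n 𝕜 : Type*} [Fintype n] [RCLike 𝕜] [DecidableEq n]
    {A : Matrix n n 𝕜} (hA : A.PosSemidef) : Matrix n n 𝕜 :=
  hA.1.eigenvectorUnitary.1 * diagonal ((↑) ∘ (Real.sqrt ∘ hA.1.eigenvalues)) *
    (star hA.1.eigenvectorUnitary : Matrix n n 𝕜)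
end OldSqrt

lemma Matrix.PosSemidef.posSemidef_sqrt {n : Type*} [Fintype n] [DecidableEq n]
    {A : Matrix n n ℝ} (hA : A.PosSemidef) : hA.sqrt.PosSemidef := by
  unfold Matrix.PosSemidef.sqrt
  have hD : (diagonal ((↑) ∘ (Real.sqrt ∘ hA.1.eigenvalues)) : Matrix n n ℝ).PosSemidef := by
    rw [posSemidef_diagonal_iff]
    intro i
    exact Real.sqrt_nonneg _
  have := hD.mul_mul_conjTranspose_same (hA.1.eigenvectorUnitary : Matrix n n ℝ)
  exact this

lemma Matrix.PosSemidef.sqrt_mul_self {n : Type*} [Fintype n] [DecidableEq n]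
    {A : Matrix n n ℝ} (hA : A.PosSemidef) : hA.sqrt * hA.sqrt = A := by
  unfold Matrix.PosSemidef.sqrt
  conv_rhs => rw [hA.1.spectral_theorem, Unitary.conjStarAlgAut_apply]
  set U : Matrix n n ℝ := (hA.1.eigenvectorUnitary : Matrix n n ℝ)
  have hU : (star hA.1.eigenvectorUnitary : Matrix n n ℝ) * U = 1 := Unitary.coe_star_mul_self _
  calc U * diagonal ((↑) ∘ (Real.sqrt ∘ hA.1.eigenvalues)) * (star hA.1.eigenvectorUnitary : Matrix n n ℝ) *
      (U * diagonal ((↑) ∘ (Real.sqrt ∘ hA.1.eigenvalues)) * (star hA.1.eigenvectorUnitary : Matrix n n ℝ))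
      = U * (diagonal ((↑) ∘ (Real.sqrt ∘ hA.1.eigenvalues)) * ((star hA.1.eigenvectorUnitary : Matrix n n ℝ) * U) *
        diagonal ((↑) ∘ (Real.sqrt ∘ hA.1.eigenvalues))) * (star hA.1.eigenvectorUnitary : Matrix n n ℝ) := by
        simp only [Matrix.mul_assoc]
    _ = _ := by
        rw [hU, Matrix.mul_one, diagonal_mul_diagonal]
        congr 3
        funext i
        simp [Real.mul_self_sqrt (hA.eigenvalues_nonneg i)]

/-- The trace norm (nuclear norm) of a real matrix `A`: the trace of the
positive semidefinite square root of `Aᵀ * A`. -/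
noncomputable def traceNorm {m n : Type*} [Fintype m] [Fintype n] [DecidableEq n]
    (A : Matrix m n ℝ) : ℝ :=
  (Matrix.posSemidef_conjTranspose_mul_self A).sqrt.trace

lemma diag_nonneg_of_psd {n : Type*} [Fintype n] [DecidableEq n] {M : Matrix n n ℝ}
    (hM : M.PosSemidef) (i : n) : 0 ≤ M i i := by
  simpa using hM.dotProduct_mulVec_nonneg (Pi.single i 1)

lemma trace_nonneg_of_psd {n : Type*} [Fintype n] [DecidableEq n] {M : Matrix n n ℝ}
    (hM : M.PosSemidef) : 0 ≤ M.trace :=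
  Finset.sum_nonneg fun i _ => diag_nonneg_of_psd hM i

/-- Operator monotonicity of the matrix square root (real case). -/
lemma sqrt_sub_psd {n : Type*} [Fintype n] [DecidableEq n] {X Y : Matrix n n ℝ}
    (hX : X.PosSemidef) (hY : Y.PosSemidef) (h : (Y - X).PosSemidef) :
    (hY.sqrt - hX.sqrt).PosSemidef := by
  set S := hY.sqrt with hSdef
  set T := hX.sqrt with hTdef
  have hS : S.PosSemidef := hY.posSemidef_sqrt
  have hT : T.PosSemidef := hX.posSemidef_sqrt
  have hD : (S - T).IsHermitian := hS.1.sub hT.1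
  apply hD.posSemidef_iff_eigenvalues_nonneg.mpr
  intro i
  show 0 ≤ hD.eigenvalues i
  set lam := hD.eigenvalues i with hlam
  set v : n → ℝ := ⇑(hD.eigenvectorBasis i) with hv
  have hvec : (S - T) *ᵥ v = lam • v := hD.mulVec_eigenvectorBasis i
  have hvne : v ≠ 0 := by
    have := hD.eigenvectorBasis.orthonormal.ne_zero i
    intro hcon
    apply this
    ext j
    exact congrFun hcon j
  by_contra hneg
  push_neg at hneg
  -- key identity: Y - X = S * (S - T) + (S - T) * T
  have hid : Y - X = S * (S - T) + (S - T) * T := by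
    have hS2 : S * S = Y := hY.sqrt_mul_self
    have hT2 : T * T = X := hX.sqrt_mul_self
    rw [Matrix.mul_sub, Matrix.sub_mul, hS2, hT2]
    abel
  set qS := star v ⬝ᵥ S *ᵥ v with hqS
  set qT := star v ⬝ᵥ T *ᵥ v with hqT
  have hqSnn : 0 ≤ qS := hS.dotProduct_mulVec_nonneg v
  have hqTnn : 0 ≤ qT := hT.dotProduct_mulVec_nonneg v
  have hstar : star v = v := by simp
  have hsymm : (S - T)ᵀ = S - T := by simpa using hD.eq
  have hmain : 0 ≤ lam * (qS + qT) := by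
    have h2 : star v ⬝ᵥ ((S - T) * T) *ᵥ v = lam * qT := by
      rw [← Matrix.mulVec_mulVec, Matrix.dotProduct_mulVec, hstar,
        ← hsymm, Matrix.vecMul_transpose, hvec]
      simp [hqT, hstar, smul_eq_mul, smul_dotProduct]
    have h1 : star v ⬝ᵥ (Y - X) *ᵥ v = lam * (qS + qT) := by
      rw [hid, Matrix.add_mulVec, dotProduct_add, ← Matrix.mulVec_mulVec, hvec,
        Matrix.mulVec_smul, dotProduct_smul, h2]
      simp [hqS, smul_eq_mul]
      ring
    rw [← h1]
    exact h.dotProduct_mulVec_nonneg v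
  have hsum : qS + qT ≤ 0 := by
    by_contra hpos
    push_neg at hpos
    nlinarith
  have hqS0 : qS = 0 := le_antisymm (by linarith) hqSnn
  have hqT0 : qT = 0 := le_antisymm (by linarith) hqTnn
  have hSv : S *ᵥ v = 0 := (hS.dotProduct_mulVec_zero_iff v).mp hqS0
  have hTv : T *ᵥ v = 0 := (hT.dotProduct_mulVec_zero_iff v).mp hqT0
  have : lam • v = 0 := by
    rw [← hvec, Matrix.sub_mulVec, hSv, hTv, sub_zero]
  have : lam = 0 := by
    rcases smul_eq_zero.mp this with h0 | h0
    · exact h0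
    · exact absurd h0 hvne
  linarith

lemma trace_sqrt_mono {n : Type*} [Fintype n] [DecidableEq n] {X Y : Matrix n n ℝ}
    (hX : X.PosSemidef) (hY : Y.PosSemidef) (h : (Y - X).PosSemidef) :
    hX.sqrt.trace ≤ hY.sqrt.trace := by
  have := trace_nonneg_of_psd (sqrt_sub_psd hX hY h)
  rw [Matrix.trace_sub] at this
  linarith

/-- The trace norm of the vertical concatenation `[A; B]` is at least the trace
norm of `A`. -/
theorem traceNorm_fromRows_ge_left {m₁ m₂ n : Type*} [Fintype m₁] [Fintype m₂]
    [Fintype n] [DecidableEq n] (A : Matrix m₁ n ℝ) (B : Matrix m₂ n ℝ) :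
    traceNorm (Matrix.fromRows A B) ≥ traceNorm A := by
  unfold traceNorm
  apply trace_sqrt_mono
  have key : (Matrix.fromRows A B)ᴴ * Matrix.fromRows A B = Aᴴ * A + Bᴴ * B := by
    rw [Matrix.conjTranspose_fromRows_eq_fromCols_conjTranspose,
      Matrix.fromCols_mul_fromRows]
  rw [key, add_sub_cancel_left]
  exact Matrix.posSemidef_conjTranspose_mul_self B
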